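/- arXiv:2202.04280 — 4 statements merged into one kernel-verified Lean document; each statement's English description precedes it below -/
import Mathlib

section
/- Let Q act on a group N by automorphisms σ and let Γ = N ⋊_σ Q, with Q identified with {(e,q)}. Then Q is almost malnormal in Γ (i.e., gQg⁻¹ ∩ Q is finite for every g ∈ Γ∖Q) if and only if for every n ∈ N with n ≠ e, the stabilizer Stab_Q(n) = {r ∈ Q : σ_r(n) = n} is finite. -/
/-!
Conjugating `inr q` by `g = (n, p)` lands in `Q` exactly when the conjugate `p q p⁻¹` fixes `n`,
so `g Q g⁻¹ ∩ Q` is the image of `Stab_Q(n)` under the injection `inr`. Hence the finiteness of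
these intersections for `g ∉ Q` (i.e. `n ≠ 1`) is the finiteness of the stabilizers.
-/

open SemidirectProduct

namespace SemidirectProduct

variable {N Q : Type*} [Group N] [Group Q] {σ : Q →* MulAut N}

theorem mem_range_inr_iff {g : N ⋊[σ] Q} : g ∈ Set.range inr ↔ g.left = 1 := by
  refine ⟨?_, fun h => ⟨g.right, ?_⟩⟩
  · rintro ⟨q, rfl⟩
    rfl
  · ext <;> simp [h]

theorem eq_inr_right_of_mem_range_inr {g : N ⋊[σ] Q} (hg : g ∈ Set.range inr) :
    g = inr g.right := by
  obtain ⟨q, rfl⟩ := hg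
  rfl

theorem left_conj_inr (g : N ⋊[σ] Q) (q : Q) :
    (g * inr q * g⁻¹).left = g.left * (σ (g.right * q * g.right⁻¹) g.left)⁻¹ := by
  simp [mul_assoc, MulAut.mul_apply]

theorem conj_inr_mem_range_inr_iff (g : N ⋊[σ] Q) (q : Q) :
    g * inr q * g⁻¹ ∈ Set.range inr ↔ σ (g.right * q * g.right⁻¹) g.left = g.left := by
  rw [mem_range_inr_iff, left_conj_inr, mul_inv_eq_one, eq_comm]

theorem conj_range_inr_inter_range_inr (g : N ⋊[σ] Q) :
    {x | ∃ q : Q, x = g * inr q * g⁻¹} ∩ Set.range inr =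
      inr '' {s : Q | σ s g.left = g.left} := by
  ext x
  constructor
  · rintro ⟨⟨q, rfl⟩, hx⟩
    refine ⟨g.right * q * g.right⁻¹, (conj_inr_mem_range_inr_iff g q).1 hx, ?_⟩
    rw [eq_inr_right_of_mem_range_inr hx]
    simp
  · rintro ⟨s, hs, rfl⟩
    have hconj : g.right * (g.right⁻¹ * s * g.right) * g.right⁻¹ = s := by group
    have hmem := (conj_inr_mem_range_inr_iff g (g.right⁻¹ * s * g.right)).2 (by rwa [hconj])
    refine ⟨⟨g.right⁻¹ * s * g.right, ?_⟩, ⟨s, rfl⟩⟩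
    rw [eq_inr_right_of_mem_range_inr hmem]
    simp [hconj]

end SemidirectProduct

/-- `Q` is almost malnormal in `N ⋊[σ] Q` iff every nontrivial element of `N` has finite
stabilizer in `Q`. -/
theorem stmt6 {N Q : Type*} [Group N] [Group Q] (σ : Q →* MulAut N) :
    (∀ g : N ⋊[σ] Q,
        g ∉ Set.range (fun q : Q => (SemidirectProduct.inr q : N ⋊[σ] Q)) →
        ({x : N ⋊[σ] Q | ∃ q : Q, x = g * SemidirectProduct.inr q * g⁻¹} ∩
          Set.range (fun q : Q => (SemidirectProduct.inr q : N ⋊[σ] Q))).Finite) ↔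
    (∀ n : N, n ≠ 1 → {r : Q | σ r n = n}.Finite) := by
  simp only [mem_range_inr_iff, conj_range_inr_inter_range_inr,
    Set.finite_image_iff inr_injective.injOn]
  constructor
  · intro h n hn
    simpa using h (inl n) hn
  · intro h g hg
    exact h g.left hg
end

section
/- Let H ≤ G be an infinite malnormal subgroup (gHg⁻¹ ∩ H = {e} for all g ∈ G∖H). Then the one-sided quasinormalizer of H in G equals H: if g ∈ G and there exists a finite set F ⊆ G with Hg ⊆ FH, then g ∈ H. -/
/-!
If `Hg ⊆ FH` with `F` finite, the map `h ↦ hgH` sends the infinite group `H` into the finitely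
many cosets `fH`, `f ∈ F`, so `h₁gH = h₂gH` for some `h₁ ≠ h₂` in `H`. Then `g⁻¹(h₁⁻¹h₂)g ∈ H`
with `h₁⁻¹h₂ ≠ 1`, which malnormality forbids unless `g ∈ H`.
-/

open scoped Pointwise

namespace Subgroup

variable {G : Type*} [Group G]

theorem exists_ne_one_conj_mem_of_mul_singleton_subset {H : Subgroup G}
    (hinf : (H : Set G).Infinite) {g : G} {F : Set G} (hFfin : F.Finite)
    (hF : (H : Set G) * {g} ⊆ F * (H : Set G)) :
    ∃ h ∈ H, h ≠ 1 ∧ g⁻¹ * h * g ∈ H := by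
  have hmaps : Set.MapsTo (fun h : G ↦ (h * g : G ⧸ H)) H ((↑) '' F) := by
    intro h hh
    obtain ⟨f, hf, k, hk, hfk⟩ := hF (Set.mul_mem_mul hh (Set.mem_singleton g))
    refine ⟨f, hf, QuotientGroup.eq.mpr ?_⟩
    rw [← hfk]
    simpa using hk
  obtain ⟨h₁, hh₁, h₂, hh₂, hne, hcoset⟩ :=
    hinf.exists_ne_map_eq_of_mapsTo hmaps (hFfin.image _)
  refine ⟨h₁⁻¹ * h₂, mul_mem (inv_mem hh₁) hh₂, fun h ↦ hne (inv_mul_eq_one.mp h), ?_⟩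
  simpa [mul_assoc] using QuotientGroup.eq.mp hcoset

theorem eq_one_of_conj_mem_of_malnormal {H : Subgroup G}
    (hmal : ∀ g : G, g ∉ H → ∀ h ∈ H, g * h * g⁻¹ ∈ H → g * h * g⁻¹ = 1)
    {g : G} (hg : g ∉ H) {h : G} (hh : h ∈ H) (hconj : g⁻¹ * h * g ∈ H) : h = 1 := by
  have hcancel : g * (g⁻¹ * h * g) * g⁻¹ = h := by group
  simpa only [hcancel] using hmal g hg _ hconj (hcancel.symm ▸ hh)

end Subgroup

/-- An infinite malnormal subgroup equals its own one-sided quasinormalizer. -/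
theorem stmt7 {G : Type*} [Group G] (H : Subgroup G) (hinf : (H : Set G).Infinite)
    (hmal : ∀ g : G, g ∉ H → ∀ h ∈ H, g * h * g⁻¹ ∈ H → g * h * g⁻¹ = 1)
    (g : G) (F : Finset G) (hF : (H : Set G) * {g} ⊆ (F : Set G) * (H : Set G)) :
    g ∈ H := by
  by_contra hg
  obtain ⟨h, hh, hne, hconj⟩ :=
    Subgroup.exists_ne_one_conj_mem_of_mul_singleton_subset hinf F.finite_toSet hF
  exact hne (Subgroup.eq_one_of_conj_mem_of_malnormal hmal hg hh hconj)
end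

section
/- Let H ≤ G be an infinite almost malnormal subgroup (gHg⁻¹ ∩ H is finite for every g ∈ G∖H). Then QN^{(1)}_G(H) = H: whenever g ∈ G and Hg ⊆ FH for some finite set F ⊆ G, one has g ∈ H. -/
/-!
Write `H g ⊆ F H` as a cover of `H` by the finitely many sets `H ∩ f H g⁻¹`, `f ∈ F`; since `H`
is infinite, one of them is infinite. Two elements `f k g⁻¹` and `f k₀ g⁻¹` of `H ∩ f H g⁻¹`
differ on the right by an element `f k k₀⁻¹ f⁻¹` of `H ∩ f H f⁻¹`, so almost malnormality
forces `f ∈ H`, and then `g ∈ H`.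
-/

open scoped Pointwise

namespace Subgroup

variable {G : Type*} [Group G]

def IsAlmostMalnormal (H : Subgroup G) : Prop :=
  ∀ g : G, g ∉ H → ({x : G | ∃ h ∈ H, x = g * h * g⁻¹} ∩ (H : Set G)).Finite

theorem inter_mul_subset_image_inter_conj {H : Subgroup G} {a b x₀ : G}
    (hx₀ : x₀ ∈ H ∧ ∃ k ∈ H, x₀ = a * k * b) :
    {x : G | x ∈ H ∧ ∃ k ∈ H, x = a * k * b} ⊆
      (· * x₀) '' ({x : G | ∃ h ∈ H, x = a * h * a⁻¹} ∩ (H : Set G)) := by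
  obtain ⟨hx₀H, k₀, hk₀, rfl⟩ := hx₀
  rintro x ⟨hxH, k, hk, rfl⟩
  refine ⟨a * k * b * (a * k₀ * b)⁻¹, ⟨⟨k * k₀⁻¹, mul_mem hk (inv_mem hk₀), by group⟩,
    mul_mem hxH (inv_mem hx₀H)⟩, by group⟩

theorem IsAlmostMalnormal.finite_inter_mul {H : Subgroup G} (hH : H.IsAlmostMalnormal)
    {a : G} (ha : a ∉ H) (b : G) :
    {x : G | x ∈ H ∧ ∃ k ∈ H, x = a * k * b}.Finite := by
  rcases Set.eq_empty_or_nonempty {x : G | x ∈ H ∧ ∃ k ∈ H, x = a * k * b} with hempty | ⟨x₀, hx₀⟩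
  · exact hempty ▸ Set.finite_empty
  · exact ((hH a ha).image _).subset (inter_mul_subset_image_inter_conj hx₀)

theorem exists_infinite_inter_mul_of_mul_subset {H : Subgroup G} (hinf : (H : Set G).Infinite)
    {g : G} {F : Finset G} (hF : (H : Set G) * {g} ⊆ (F : Set G) * (H : Set G)) :
    ∃ f ∈ F, {x : G | x ∈ H ∧ ∃ k ∈ H, x = f * k * g⁻¹}.Infinite := by
  have hcover : (H : Set G) ⊆ ⋃ f ∈ F, {x : G | x ∈ H ∧ ∃ k ∈ H, x = f * k * g⁻¹} := by
    intro x hx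
    obtain ⟨f, hf, k, hk, hfk⟩ := hF (Set.mul_mem_mul hx rfl)
    exact Set.mem_biUnion hf ⟨hx, k, hk, by simp only at hfk; rw [hfk]; group⟩
  by_contra! hfin
  exact hinf ((F.finite_toSet.biUnion hfin).subset hcover)

end Subgroup

/-- An infinite almost malnormal subgroup equals its own one-sided quasinormalizer. -/
theorem stmt8 {G : Type*} [Group G] (H : Subgroup G) (hinf : (H : Set G).Infinite)
    (hmal : ∀ g : G, g ∉ H → ({x : G | ∃ h ∈ H, x = g * h * g⁻¹} ∩ (H : Set G)).Finite)
    (g : G) (F : Finset G) (hF : (H : Set G) * {g} ⊆ (F : Set G) * (H : Set G)) :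
    g ∈ H := by
  have hH : H.IsAlmostMalnormal := hmal
  obtain ⟨f, -, hinfinite⟩ := Subgroup.exists_infinite_inter_mul_of_mul_subset hinf hF
  have hfH : f ∈ H := by
    by_contra hf
    exact hinfinite (hH.finite_inter_mul hf g⁻¹)
  obtain ⟨x, hxH, k, hk, hx⟩ := hinfinite.nonempty
  have hg : g = x⁻¹ * (f * k) := by rw [hx]; group
  exact hg ▸ mul_mem (inv_mem hxH) (mul_mem hfH hk)
end

section
/- Let Q act on a group N by automorphisms σ. Suppose N is icc, and suppose that for every q ∈ Q with q ≠ e and every m ∈ N, the subgroup {n ∈ N : σ_q(n) = m⁻¹ n m} has infinite index in N. Then the semidirect product Γ = N ⋊_σ Q is icc. -/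
/-- The subgroup `{n ∈ N : σ_q(n) = m⁻¹ n m}` of twisted fixed points. -/
def twistedFix {N Q : Type*} [Group N] [Group Q] (σ : Q →* MulAut N) (q : Q) (m : N) :
    Subgroup N where
  carrier := {n | σ q n = m⁻¹ * n * m}
  one_mem' := by simp
  mul_mem' := by
    intro a b ha hb
    simp only [Set.mem_setOf_eq, map_mul] at *
    rw [ha, hb]
    group
  inv_mem' := by
    intro a ha
    simp only [Set.mem_setOf_eq, map_inv] at *
    rw [ha]
    group

/-!
Conjugating `(m, q)` by elements of `N` alone already yields infinitely many conjugates: the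
centralizer of `(m, q)` inside `N` is exactly `twistedFix σ q m` (for `q = 1` the centralizer of
`m` in `N`), and a conjugacy class is infinite iff the centralizer has infinite index.
-/

open Subgroup SemidirectProduct

section Conjugates

variable {G : Type*} [Group G]

theorem setOf_conj_eq_orbit_conjAct (g : G) :
    {x : G | ∃ c : G, x = c * g * c⁻¹} = MulAction.orbit (ConjAct G) g := by
  ext x
  rw [Set.mem_ofPred_eq, ConjAct.mem_orbit_conjAct, isConj_comm, isConj_iff]
  exact exists_congr fun c => eq_comm

theorem infinite_conjugates_iff_index_centralizer_eq_zero (g : G) :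
    {x : G | ∃ c : G, x = c * g * c⁻¹}.Infinite ↔ (centralizer {g}).index = 0 := by
  have hindex : (centralizer {g}).index = (MulAction.stabilizer (ConjAct G) g).index := by
    rw [centralizer_eq_comap_stabilizer]
    exact index_comap_of_surjective _ ConjAct.toConjAct.surjective
  rw [hindex, MulAction.index_stabilizer, setOf_conj_eq_orbit_conjAct]
  refine ⟨Set.Infinite.ncard, fun h hfin => ?_⟩
  rw [Set.ncard_eq_zero hfin] at h
  exact (h ▸ MulAction.mem_orbit_self g : g ∈ (∅ : Set G))

end Conjugates

section SemidirectProduct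

variable {N Q : Type*} [Group N] [Group Q] (σ : Q →* MulAut N)

theorem twistedFix_one (m : N) : twistedFix σ 1 m = centralizer {m} := by
  ext n
  change σ 1 n = m⁻¹ * n * m ↔ _
  rw [mem_centralizer_singleton_iff, map_one, MulAut.one_apply, mul_assoc, eq_inv_mul_iff_mul_eq,
    eq_comm]

theorem comap_inl_centralizer (m : N) (q : Q) :
    (centralizer {(⟨m, q⟩ : N ⋊[σ] Q)}).comap inl = twistedFix σ q m := by
  ext n
  rw [mem_comap, mem_centralizer_singleton_iff, SemidirectProduct.ext_iff]
  change (_ ∧ _) ↔ σ q n = m⁻¹ * n * m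
  simp [mul_assoc, inv_mul_eq_iff_eq_mul, eq_comm]

end SemidirectProduct

/-- If `N` is icc and all the twisted fixed-point subgroups `{n : σ_q(n) = m⁻¹ n m}` (for
`q ≠ e`) have infinite index in `N`, then `N ⋊[σ] Q` is icc. -/
theorem stmt14 {N Q : Type*} [Group N] [Group Q] (σ : Q →* MulAut N)
    (hN : ∀ n : N, n ≠ 1 → {x : N | ∃ c : N, x = c * n * c⁻¹}.Infinite)
    (hidx : ∀ q : Q, q ≠ 1 → ∀ m : N, (twistedFix σ q m).index = 0) :
    ∀ g : N ⋊[σ] Q, g ≠ 1 → {x : N ⋊[σ] Q | ∃ c : N ⋊[σ] Q, x = c * g * c⁻¹}.Infinite := by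
  rintro ⟨m, q⟩ hg
  rw [infinite_conjugates_iff_index_centralizer_eq_zero]
  refine index_eq_zero_of_relIndex_eq_zero (K := (inl : N →* N ⋊[σ] Q).range) ?_
  rw [← index_comap, comap_inl_centralizer]
  by_cases hq : q = 1
  · subst hq
    have hm : m ≠ 1 := by rintro rfl; exact hg rfl
    rw [twistedFix_one, ← infinite_conjugates_iff_index_centralizer_eq_zero]
    exact hN m hm
  · exact hidx q hq m
end
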